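/- arXiv:2010.02899 — 7 statements merged into one kernel-verified Lean document; each statement's English description precedes it below -/
import Mathlib

section
/- Let f be a polynomial in (B/p^mB)[x₁,…,xₙ] such that at least one coefficient of f is a nonzero divisor of B/p^mB, and let g be a nonzero polynomial in (B/p^mB)[x₁,…,xₙ]. If n is the largest natural number such that the class of p^n divides g (i.e., p^n divides every coefficient of a lift of g, and p^{n+1} does not), then the class of p^{n+1} does not divide f·g. -/
open MvPolynomial

/-!
Write `q` for the class of `p` in `R = B ⧸ (p ^ m)`. Since `q ^ N` divides every coefficient of
`g`, we have `g = q ^ N • h`, and maximality of `N` says that `q` does not divide `h`. A nonzero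
divisor of `R` is not a multiple of `q`, so `q` does not divide `f` either. As `R ⧸ (q) = B ⧸ (p)`
is a domain, `(q)` generates a prime ideal of `R[x₁,…,xₙ]`, so `q` does not divide `f * h`.
Finally `q ^ (N + 1) ∣ q ^ N * c` forces `q ∣ c` in `R` as long as `N < m`, hence
`q ^ (N + 1)` does not divide `f * g = q ^ N • (f * h)`.
-/

theorem MvPolynomial.isPrime_map_C_of_isPrime {R σ : Type*} [CommRing R] {P : Ideal R}
    (hP : P.IsPrime) : (Ideal.map (C : R →+* MvPolynomial σ R) P).IsPrime := by
  rw [← Ideal.mk_ker (I := P), ← ker_map]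
  exact RingHom.ker_isPrime _

theorem Ideal.isPrime_span_mk_of_dvd {R : Type*} [CommRing R] {p a : R}
    (hp : (Ideal.span {p}).IsPrime) (hpa : p ∣ a) :
    (Ideal.span {Ideal.Quotient.mk (Ideal.span {a}) p}).IsPrime := by
  rw [← Set.image_singleton, ← Ideal.map_span]
  refine Ideal.map_isPrime_of_surjective Ideal.Quotient.mk_surjective ?_
  rw [Ideal.mk_ker, Ideal.span_singleton_le_span_singleton]
  exact hpa

section QuotientByPrimePower

variable {B : Type*} [CommRing B] {p : B} {m : ℕ}

local notation "q" => Ideal.Quotient.mk (Ideal.span {p ^ m}) p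

theorem mk_pow_eq_zero : q ^ m = 0 := by
  rw [← map_pow, Ideal.Quotient.eq_zero_iff_mem]
  exact Ideal.mem_span_singleton_self _

variable [IsDomain B]

theorem dvd_of_pow_succ_dvd_pow_mul (hp : p ≠ 0) {N : ℕ} (hN : N < m)
    {c : B ⧸ Ideal.span {p ^ m}} (h : q ^ (N + 1) ∣ q ^ N * c) : q ∣ c := by
  obtain ⟨c, rfl⟩ := Ideal.Quotient.mk_surjective c
  obtain ⟨d, hd⟩ := h
  obtain ⟨d, rfl⟩ := Ideal.Quotient.mk_surjective d
  simp only [← map_pow, ← map_mul, Ideal.Quotient.eq, Ideal.mem_span_singleton] at hd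
  have hsplit : p ^ m = p ^ N * p ^ (m - N) := by rw [← pow_add, Nat.add_sub_cancel' hN.le]
  have hdiff : p ^ (m - N) ∣ c - p * d := by
    rwa [hsplit, show p ^ N * c - p ^ (N + 1) * d = p ^ N * (c - p * d) by ring,
      mul_dvd_mul_iff_left (pow_ne_zero N hp)] at hd
  have hpc : p ∣ c :=
    (dvd_sub_left (dvd_mul_right p d)).mp ((dvd_pow_self p (Nat.sub_ne_zero_of_lt hN)).trans hdiff)
  exact map_dvd _ hpc

theorem not_dvd_of_mem_nonZeroDivisors (hp : Prime p) (hm : m ≠ 0)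
    {c : B ⧸ Ideal.span {p ^ m}} (hc : c ∈ nonZeroDivisors _) : ¬ q ∣ c := by
  rintro ⟨d, rfl⟩
  have hkill : q ^ (m - 1) * (q * d) = 0 := by
    rw [← mul_assoc, ← pow_succ, Nat.sub_add_cancel (Nat.one_le_iff_ne_zero.2 hm),
      mk_pow_eq_zero, zero_mul]
  have hpow := mem_nonZeroDivisors_iff_right.mp hc _ hkill
  rw [← map_pow, Ideal.Quotient.eq_zero_iff_mem, Ideal.mem_span_singleton,
    pow_dvd_pow_iff hp.ne_zero hp.not_isUnit] at hpow
  omega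

end QuotientByPrimePower

theorem stmt2_general {B : Type*} [CommRing B] [IsDomain B]
    (p : B) (hp : Prime p) (m : ℕ) (n : ℕ)
    (f g : MvPolynomial (Fin n) (B ⧸ Ideal.span {p ^ m}))
    (hf : ∃ d, MvPolynomial.coeff d f ∈ nonZeroDivisors (B ⧸ Ideal.span {p ^ m}))
    (N : ℕ)
    (hdvd : ∀ d, (Ideal.Quotient.mk (Ideal.span {p ^ m}) p) ^ N ∣ MvPolynomial.coeff d g)
    (hmax : ¬ ∀ d, (Ideal.Quotient.mk (Ideal.span {p ^ m}) p) ^ (N + 1) ∣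
        MvPolynomial.coeff d g) :
    ¬ ∀ d, (Ideal.Quotient.mk (Ideal.span {p ^ m}) p) ^ (N + 1) ∣
        MvPolynomial.coeff d (f * g) := by
  set q := Ideal.Quotient.mk (Ideal.span {p ^ m}) p
  have hNm : N < m := by
    by_contra! hmN
    have hqN : q ^ N = 0 := pow_eq_zero_of_le hmN mk_pow_eq_zero
    have hdvd_pow : q ^ (N + 1) ∣ q ^ N := by rw [hqN]; exact dvd_zero _
    exact hmax fun d => hdvd_pow.trans (hdvd d)
  obtain ⟨h, rfl⟩ : C (q ^ N) ∣ g := (C_dvd_iff_dvd_coeff _ _).2 hdvd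
  have hh : ¬ C q ∣ h := by
    rintro ⟨k, rfl⟩
    exact hmax ((C_dvd_iff_dvd_coeff _ _).1 ⟨k, by rw [pow_succ, C_mul]; ring⟩)
  have hf' : ¬ C q ∣ f := by
    obtain ⟨d, hd⟩ := hf
    exact fun hqf => not_dvd_of_mem_nonZeroDivisors hp (by omega) hd
      ((C_dvd_iff_dvd_coeff _ _).1 hqf d)
  have hprime : (Ideal.span {C q} : Ideal (MvPolynomial (Fin n) _)).IsPrime := by
    simpa only [Ideal.map_span, Set.image_singleton] using isPrime_map_C_of_isPrime (σ := Fin n)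
      (Ideal.isPrime_span_mk_of_dvd ((Ideal.span_singleton_prime hp.ne_zero).2 hp)
        (dvd_pow_self p (by omega : m ≠ 0)))
  intro H
  have hfh : C q ∣ f * h := (C_dvd_iff_dvd_coeff _ _).2 fun d =>
    dvd_of_pow_succ_dvd_pow_mul hp.ne_zero hNm (by rw [← coeff_C_mul, mul_left_comm]; exact H d)
  simp only [← Ideal.mem_span_singleton] at hfh hf' hh
  exact (hprime.mem_or_mem hfh).elim hf' hh

/-- Proposition 2.2: let `R = B ⧸ p ^ m B` (`m ≥ 2`), `f, g ∈ R[x₁,…,xₙ]` with some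
coefficient of `f` a nonzero divisor and `g ≠ 0`.  If `N` is the largest natural number
such that the class of `p ^ N` divides every coefficient of `g`, then the class of
`p ^ (N + 1)` does not divide every coefficient of `f * g`. -/
theorem stmt2 {B : Type*} [CommRing B] [IsDomain B] [IsPrincipalIdealRing B]
    (p : B) (hp : Prime p) (m : ℕ) (hm : 2 ≤ m) (n : ℕ)
    (f g : MvPolynomial (Fin n) (B ⧸ Ideal.span {p ^ m}))
    (hf : ∃ d, MvPolynomial.coeff d f ∈ nonZeroDivisors (B ⧸ Ideal.span {p ^ m}))
    (hg : g ≠ 0) (N : ℕ)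
    (hdvd : ∀ d, (Ideal.Quotient.mk (Ideal.span {p ^ m}) p) ^ N ∣ MvPolynomial.coeff d g)
    (hmax : ¬ ∀ d, (Ideal.Quotient.mk (Ideal.span {p ^ m}) p) ^ (N + 1) ∣
        MvPolynomial.coeff d g) :
    ¬ ∀ d, (Ideal.Quotient.mk (Ideal.span {p ^ m}) p) ^ (N + 1) ∣
        MvPolynomial.coeff d (f * g) :=
  stmt2_general p hp m n f g hf N hdvd hmax
end

section
/- Let A be a commutative Noetherian ring and I an ideal of the polynomial ring A[x₁,…,xₙ]. Fix 1 ≤ t ≤ n and a monomial order that is an elimination order for x₁,…,x_t. If G is a Gröbner basis of I with respect to this order (meaning the leading terms of elements of G generate the ideal of leading terms of I), then G ∩ A[x_{t+1},…,xₙ] is a Gröbner basis of I ∩ A[x_{t+1},…,xₙ] with respect to the induced order. -/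
/-!
Let `ρ` be the retraction of `A[x₁,…,xₙ]` onto `A[x_{t+1},…,xₙ]` sending `x₁,…,x_t` to `0`;
it is a ring map fixing the subalgebra. If `f ∈ I ∩ A[x_{t+1},…,xₙ]`, its leading term is a
combination of leading terms of elements of `G`, and applying `ρ` to this combination leaves
the left side unchanged. On the right, `ρ` kills every leading monomial involving one of
`x₁,…,x_t`; when the leading monomial of `g ∈ G` avoids them, the elimination property forces
every monomial of `g` to avoid them too, so `g ∈ G ∩ A[x_{t+1},…,xₙ]`.
-/

open MvPolynomial

/-- `g` is the leading term of `f` with respect to the linear order `ord` on monomials: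
some `d` in the support of `f` dominates the support, and `g = monomial d (coeff d f)`. -/
def IsLeadTerm {A : Type*} [CommRing A] {n : ℕ}
    (ord : LinearOrder ((Fin n) →₀ ℕ)) (f g : MvPolynomial (Fin n) A) : Prop :=
  ∃ d ∈ f.support, (∀ e ∈ f.support, ord.le e d) ∧
    g = MvPolynomial.monomial d (MvPolynomial.coeff d f)

namespace MvPolynomial

variable {σ R : Type*} [CommSemiring R]

theorem mem_supported_of_forall_mem_support {s : Set σ} {p : MvPolynomial σ R}
    (h : ∀ d ∈ p.support, ↑d.support ⊆ s) : p ∈ supported R s := by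
  classical
  rw [mem_supported]
  intro i hi
  obtain ⟨d, hd, hid⟩ := (mem_vars_iff_mem_support i).1 hi
  exact h d hd hid

theorem monomial_mem_supported {s : Set σ} {d : σ →₀ ℕ} (hd : ↑d.support ⊆ s) (a : R) :
    monomial d a ∈ supported R s :=
  mem_supported_of_forall_mem_support fun _ he =>
    Finset.mem_singleton.1 (support_monomial_subset he) ▸ hd

variable (s : Set σ)

noncomputable def supportedRetraction : MvPolynomial σ R →ₐ[R] supported R s :=
  (supportedEquivMvPolynomial s).symm.toAlgHom.comp
    (killCompl (R := R) (Subtype.val_injective (p := (· ∈ s))))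

variable {s}

theorem supportedRetraction_of_mem {p : MvPolynomial σ R} (hp : p ∈ supported R s) :
    supportedRetraction s p = ⟨p, hp⟩ := by
  obtain ⟨q, rfl⟩ := (supported_eq_range_rename s).le hp
  ext
  simp [supportedRetraction, killCompl_rename_app, supportedEquivMvPolynomial]

theorem supportedRetraction_monomial_of_not_subset {d : σ →₀ ℕ} (hd : ¬ ↑d.support ⊆ s)
    (a : R) : supportedRetraction s (monomial d a) = 0 := by
  have hd' : ¬ ↑d.support ⊆ Set.range ((↑) : s → σ) := by rwa [Subtype.range_coe]
  simp [supportedRetraction, killCompl_monomial_eq_zero_of_not_subset _ a hd']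

end MvPolynomial

theorem Finsupp.coe_support_subset_setOf_le_iff {n t : ℕ} (d : Fin n →₀ ℕ) :
    ↑d.support ⊆ {i : Fin n | t ≤ (i : ℕ)} ↔ ∀ i : Fin n, (i : ℕ) < t → d i = 0 := by
  simp only [Set.subset_def, Finset.mem_coe, Finsupp.mem_support_iff, Set.mem_ofPred_eq]
  exact forall_congr' fun i => by omega

section Elimination

variable {A : Type*} [CommRing A] {n : ℕ} {ord : LinearOrder (Fin n →₀ ℕ)} {s : Set (Fin n)}

theorem IsLeadTerm.supportedRetraction_eq_zero_or
    (helim : ∀ d e : Fin n →₀ ℕ, ¬ ↑d.support ⊆ s → ↑e.support ⊆ s → ord.lt e d)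
    {f g : MvPolynomial (Fin n) A} (hfg : IsLeadTerm ord f g) :
    supportedRetraction s g = 0 ∨ f ∈ supported A s ∧ g ∈ supported A s := by
  obtain ⟨d, -, hmax, rfl⟩ := hfg
  by_cases hd : ↑d.support ⊆ s
  · refine .inr ⟨mem_supported_of_forall_mem_support fun e he => ?_, monomial_mem_supported hd _⟩
    by_contra he'
    exact ((ord.lt_iff_le_not_ge _ _).1 (helim e d he' hd)).2 (hmax e he)
  · exact .inl (supportedRetraction_monomial_of_not_subset hd _)

theorem span_leadTerm_comap_supported_le
    (helim : ∀ d e : Fin n →₀ ℕ, ¬ ↑d.support ⊆ s → ↑e.support ⊆ s → ord.lt e d)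
    {I : Ideal (MvPolynomial (Fin n) A)} {G : Set (MvPolynomial (Fin n) A)}
    (hGB : Ideal.span {g | ∃ f ∈ I, IsLeadTerm ord f g}
         = Ideal.span {g | ∃ f ∈ G, IsLeadTerm ord f g}) :
    Ideal.span {g : supported A s | ∃ f : supported A s, f ∈ Ideal.comap (supported A s).val I ∧
        IsLeadTerm ord (f : MvPolynomial (Fin n) A) (g : MvPolynomial (Fin n) A)}
      ≤ Ideal.span {g : supported A s | ∃ f : supported A s, (f : MvPolynomial (Fin n) A) ∈ G ∧
        IsLeadTerm ord (f : MvPolynomial (Fin n) A) (g : MvPolynomial (Fin n) A)} := by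
  rw [Ideal.span_le]
  rintro g ⟨f, hfI, hfg⟩
  have hg : (g : MvPolynomial (Fin n) A) ∈ Ideal.span {g | ∃ f ∈ G, IsLeadTerm ord f g} :=
    hGB ▸ Ideal.subset_span ⟨f, hfI, hfg⟩
  have hg' := Ideal.mem_map_of_mem (supportedRetraction s) hg
  rw [supportedRetraction_of_mem g.2, Ideal.map_span] at hg'
  refine Ideal.span_le.2 ?_ hg'
  rintro _ ⟨g', ⟨f', hf'G, hf'g'⟩, rfl⟩
  rcases hf'g'.supportedRetraction_eq_zero_or helim with h0 | ⟨hf', hg''⟩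
  · rw [h0]
    exact zero_mem _
  · rw [supportedRetraction_of_mem hg'']
    exact Ideal.subset_span ⟨⟨f', hf'⟩, hf'G, hf'g'⟩

end Elimination

theorem stmt5_general {A : Type*} [CommRing A] {n : ℕ}
    (ord : LinearOrder ((Fin n) →₀ ℕ))
    (t : ℕ)
    (helim : ∀ d e : (Fin n) →₀ ℕ, (∃ i : Fin n, (i : ℕ) < t ∧ d i ≠ 0) →
      (∀ i : Fin n, (i : ℕ) < t → e i = 0) → ord.lt e d)
    (I : Ideal (MvPolynomial (Fin n) A))
    (G : Set (MvPolynomial (Fin n) A)) (hGI : G ⊆ I)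
    (hGB : Ideal.span {g | ∃ f ∈ I, IsLeadTerm ord f g}
         = Ideal.span {g | ∃ f ∈ G, IsLeadTerm ord f g}) :
    -- the subalgebra `A[x_{t+1},…,xₙ]`
    letI Sub := MvPolynomial.supported A {i : Fin n | t ≤ (i : ℕ)}
    -- `I_t = I ∩ A[x_{t+1},…,xₙ]` as an ideal of the subalgebra
    letI It : Ideal Sub := Ideal.comap Sub.val I
    -- `G_t = G ∩ A[x_{t+1},…,xₙ]` is a Gröbner basis of `I_t`
    (∀ g : Sub, (g : MvPolynomial (Fin n) A) ∈ G → g ∈ It) ∧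
    Ideal.span {g : Sub | ∃ f : Sub, f ∈ It ∧
        IsLeadTerm ord (f : MvPolynomial (Fin n) A) (g : MvPolynomial (Fin n) A)}
      = Ideal.span {g : Sub | ∃ f : Sub, (f : MvPolynomial (Fin n) A) ∈ G ∧
        IsLeadTerm ord (f : MvPolynomial (Fin n) A) (g : MvPolynomial (Fin n) A)} := by
  have helim' : ∀ d e : Fin n →₀ ℕ, ¬ ↑d.support ⊆ {i : Fin n | t ≤ (i : ℕ)} →
      ↑e.support ⊆ {i : Fin n | t ≤ (i : ℕ)} → ord.lt e d := fun d e hd he =>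
    helim d e (by simpa [Finsupp.coe_support_subset_setOf_le_iff] using hd)
      ((Finsupp.coe_support_subset_setOf_le_iff e).1 he)
  exact ⟨fun g hg => hGI hg, le_antisymm (span_leadTerm_comap_supported_le helim' hGB)
    (Ideal.span_mono fun g ⟨f, hfG, hfg⟩ => ⟨f, hGI hfG, hfg⟩)⟩

/-- Lemma 3.2 (elimination): let `A` be a commutative Noetherian ring, `I` an ideal of
`A[x₁,…,xₙ]`, `1 ≤ t ≤ n`, and `ord` a monomial order that is an elimination order for
`x₁,…,x_t` (indices `i` with `i < t`).  If `G ⊆ I` is a finite Gröbner basis of `I`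
(the leading terms of elements of `G` generate the leading term ideal of `I`), then
`G ∩ A[x_{t+1},…,xₙ]` is a Gröbner basis of `I ∩ A[x_{t+1},…,xₙ]`, the intersections
being taken in the subalgebra of polynomials supported on the variables `x_{t+1},…,xₙ`,
with respect to the induced order. -/
theorem stmt5 {A : Type*} [CommRing A] [IsNoetherianRing A] {n : ℕ}
    (ord : LinearOrder ((Fin n) →₀ ℕ))
    (hadd : ∀ a b c : (Fin n) →₀ ℕ, ord.le a b → ord.le (a + c) (b + c))
    (t : ℕ) (ht1 : 1 ≤ t) (htn : t ≤ n)
    (helim : ∀ d e : (Fin n) →₀ ℕ, (∃ i : Fin n, (i : ℕ) < t ∧ d i ≠ 0) →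
      (∀ i : Fin n, (i : ℕ) < t → e i = 0) → ord.lt e d)
    (I : Ideal (MvPolynomial (Fin n) A))
    (G : Set (MvPolynomial (Fin n) A)) (hGfin : G.Finite) (hGI : G ⊆ I)
    (hGB : Ideal.span {g | ∃ f ∈ I, IsLeadTerm ord f g}
         = Ideal.span {g | ∃ f ∈ G, IsLeadTerm ord f g}) :
    -- the subalgebra `A[x_{t+1},…,xₙ]`
    letI Sub := MvPolynomial.supported A {i : Fin n | t ≤ (i : ℕ)}
    -- `I_t = I ∩ A[x_{t+1},…,xₙ]` as an ideal of the subalgebra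
    letI It : Ideal Sub := Ideal.comap Sub.val I
    -- `G_t = G ∩ A[x_{t+1},…,xₙ]` is a Gröbner basis of `I_t`
    (∀ g : Sub, (g : MvPolynomial (Fin n) A) ∈ G → g ∈ It) ∧
    Ideal.span {g : Sub | ∃ f : Sub, f ∈ It ∧
        IsLeadTerm ord (f : MvPolynomial (Fin n) A) (g : MvPolynomial (Fin n) A)}
      = Ideal.span {g : Sub | ∃ f : Sub, (f : MvPolynomial (Fin n) A) ∈ G ∧
        IsLeadTerm ord (f : MvPolynomial (Fin n) A) (g : MvPolynomial (Fin n) A)} :=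
  stmt5_general ord t helim I G hGI hGB
end

section
/- Let R be a PID and I₁,…,I_r ideals of R[x₁,…,xₙ] with generators f_k. For each j choose a generator f_{k_j} of I_j. Then the kernel of the presentation φ : R[x][{T_{k,j}}] → R[x][I₁t₁,…,I_rt_r], T_{k,j} ↦ f_k t_j, equals the saturation L : (∏_j f_{k_j})^∞ where L = ⟨{ f_{k_j}T_{k,j} − f_k T_{k_j,j} : all j, all generators f_k of I_j }⟩. -/
/-!
Put `g = ∏ⱼ f_{k_j}`. Modulo `L`, the product `g T_{k,j}` equals `(∏_{i ≠ j} f_{k_i}) f_k T_{k_j,j}`,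
so for every `q` some `gᴺ q` is congruent mod `L` to a polynomial `p` in the distinguished
variables `T_{k_j,j}` alone. On those variables `φ` is the substitution `T_{k_j,j} ↦ f_{k_j} tⱼ`,
which multiplies the coefficient of `tᵈ` by `∏ⱼ f_{k_j}^{dⱼ}` and is therefore injective.
Since `L ⊆ ker φ`, `φ q = 0` forces `φ p = 0`, so `p = 0` and `gᴺ q ∈ L`. Conversely, `g` is a
non-zero-divisor, so `gˡ q ∈ L ⊆ ker φ` gives `φ q = 0`.
-/

open MvPolynomial

open scoped nonZeroDivisors

namespace MvPolynomial

variable {A σ : Type*} [CommRing A]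

theorem aeval_C_mul_X_monomial (b : σ → A) (u : σ →₀ ℕ) (a : A) :
    aeval (fun i => C (b i) * X i) (monomial u a)
      = monomial u (u.prod (fun i e => b i ^ e) * a) := by
  rw [aeval_monomial, monomial_eq, algebraMap_eq, C_mul]
  simp only [mul_pow, Finsupp.prod_mul, ← map_pow]
  rw [← map_finsuppProd]
  ring

theorem coeff_aeval_C_mul_X (b : σ → A) (p : MvPolynomial σ A) (d : σ →₀ ℕ) :
    coeff d (aeval (fun i => C (b i) * X i) p) = d.prod (fun i e => b i ^ e) * coeff d p := by
  classical
  induction p using MvPolynomial.induction_on' with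
  | monomial u a =>
    rw [aeval_C_mul_X_monomial, coeff_monomial, coeff_monomial]
    split_ifs with h
    · rw [h]
    · rw [mul_zero]
  | add p q hp hq => rw [map_add, coeff_add, coeff_add, hp, hq, mul_add]

theorem aeval_C_mul_X_injective {b : σ → A} (hb : ∀ i, b i ∈ A⁰) :
    Function.Injective (aeval (fun i => C (b i) * X i) :
      MvPolynomial σ A →ₐ[A] MvPolynomial σ A) := by
  refine (injective_iff_map_eq_zero _).2 fun p hp => ?_
  ext d
  have hd : d.prod (fun i e => b i ^ e) ∈ A⁰ :=
    SubmonoidClass.finsuppProd_mem _ _ _ fun i _ => pow_mem (hb i) _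
  rw [coeff_zero, ← mul_left_mem_nonZeroDivisors_eq_zero_iff hd, ← coeff_aeval_C_mul_X, hp,
    coeff_zero]

theorem C_mul_eq_zero_iff {a : A} (ha : a ∈ A⁰) (p : MvPolynomial σ A) :
    C a * p = 0 ↔ p = 0 := by
  refine ⟨fun h => ?_, fun h => by rw [h, mul_zero]⟩
  ext d
  rw [coeff_zero, ← mul_left_mem_nonZeroDivisors_eq_zero_iff ha, ← coeff_C_mul, h, coeff_zero]

end MvPolynomial

namespace MultiRees

variable {A κ ι : Type*} [CommRing A] (f : κ → A) (jdx : κ → ι) (kj : ι → κ)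

noncomputable def presentation : MvPolynomial κ A →ₐ[A] MvPolynomial ι A :=
  aeval fun k => C (f k) * X (jdx k)

noncomputable def koszulIdeal : Ideal (MvPolynomial κ A) :=
  Ideal.span (Set.range fun k => C (f (kj (jdx k))) * X k - C (f k) * X (kj (jdx k)))

section Fintype

variable [Fintype ι]

theorem exists_C_prod_mul_X_sub_rename_mem_koszulIdeal (k : κ) :
    ∃ p : MvPolynomial ι A,
      C (∏ j, f (kj j)) * X k - rename kj p ∈ koszulIdeal f jdx kj := by
  classical
  set h := ∏ j ∈ Finset.univ.erase (jdx k), f (kj j)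
  refine ⟨C (f k * h) * X (jdx k), ?_⟩
  have hsplit : C (∏ j, f (kj j)) * X k - rename kj (C (f k * h) * X (jdx k))
      = C h * (C (f (kj (jdx k))) * X k - C (f k) * X (kj (jdx k))) := by
    rw [← Finset.mul_prod_erase _ _ (Finset.mem_univ (jdx k))]
    simp only [map_mul, rename_C, rename_X]
    ring
  rw [hsplit]
  exact Ideal.mul_mem_left _ _ (Ideal.subset_span ⟨k, rfl⟩)

theorem exists_C_prod_pow_mul_sub_rename_mem_koszulIdeal (q : MvPolynomial κ A) :
    ∃ (N : ℕ) (p : MvPolynomial ι A),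
      C ((∏ j, f (kj j)) ^ N) * q - rename kj p ∈ koszulIdeal f jdx kj := by
  set g := ∏ j, f (kj j)
  induction q using MvPolynomial.induction_on with
  | C a => exact ⟨0, C a, by simp⟩
  | add q₁ q₂ h₁ h₂ =>
    obtain ⟨N₁, p₁, h₁⟩ := h₁
    obtain ⟨N₂, p₂, h₂⟩ := h₂
    refine ⟨N₁ + N₂, C (g ^ N₂) * p₁ + C (g ^ N₁) * p₂, ?_⟩
    have e : C (g ^ (N₁ + N₂)) * (q₁ + q₂)
          - rename kj (C (g ^ N₂) * p₁ + C (g ^ N₁) * p₂)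
        = C (g ^ N₂) * (C (g ^ N₁) * q₁ - rename kj p₁)
          + C (g ^ N₁) * (C (g ^ N₂) * q₂ - rename kj p₂) := by
      simp only [pow_add, map_add, map_mul, rename_C]
      ring
    rw [e]
    exact Ideal.add_mem _ (Ideal.mul_mem_left _ _ h₁) (Ideal.mul_mem_left _ _ h₂)
  | mul_X q k h =>
    obtain ⟨N, p, h⟩ := h
    obtain ⟨p', h'⟩ := exists_C_prod_mul_X_sub_rename_mem_koszulIdeal f jdx kj k
    refine ⟨N + 1, p * p', ?_⟩
    have e : C (g ^ (N + 1)) * (q * X k) - rename kj (p * p')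
        = (C (g ^ N) * q - rename kj p) * (C g * X k)
          + rename kj p * (C g * X k - rename kj p') := by
      simp only [pow_succ, map_mul]
      ring
    rw [e]
    exact Ideal.add_mem _ (Ideal.mul_mem_right _ _ h) (Ideal.mul_mem_left _ _ h')

end Fintype

variable {f jdx kj}

theorem koszulIdeal_le_ker (hkj : ∀ j, jdx (kj j) = j) :
    koszulIdeal f jdx kj ≤ RingHom.ker (presentation f jdx) := by
  rw [koszulIdeal, Ideal.span_le]
  rintro _ ⟨k, rfl⟩
  simp only [SetLike.mem_coe, RingHom.mem_ker, presentation, map_sub, map_mul, aeval_X,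
    aeval_C, algebraMap_eq, hkj]
  ring

theorem presentation_C (a : A) : presentation f jdx (C a) = C a := by
  rw [presentation, aeval_C, algebraMap_eq]

theorem presentation_rename (hkj : ∀ j, jdx (kj j) = j) (p : MvPolynomial ι A) :
    presentation f jdx (rename kj p) = aeval (fun j => C (f (kj j)) * X j) p := by
  rw [presentation, aeval_rename]
  simp only [Function.comp_def, hkj]

theorem presentation_eq_zero_iff [Fintype ι] (hkj : ∀ j, jdx (kj j) = j)
    (hf : ∀ j, f (kj j) ∈ A⁰) (q : MvPolynomial κ A) :
    presentation f jdx q = 0 ↔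
      ∃ ℓ : ℕ, C ((∏ j, f (kj j)) ^ ℓ) * q ∈ koszulIdeal f jdx kj := by
  constructor
  · intro hq
    obtain ⟨N, p, hL⟩ := exists_C_prod_pow_mul_sub_rename_mem_koszulIdeal f jdx kj q
    have hp : aeval (fun j => C (f (kj j)) * X j) p = 0 := by
      have := koszulIdeal_le_ker hkj hL
      rwa [RingHom.mem_ker, map_sub, map_mul, presentation_C, hq, mul_zero, zero_sub,
        neg_eq_zero, presentation_rename hkj] at this
    rw [(map_eq_zero_iff _ (aeval_C_mul_X_injective hf)).1 hp, map_zero, sub_zero] at hL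
    exact ⟨N, hL⟩
  · rintro ⟨ℓ, hℓ⟩
    have hg : (∏ j, f (kj j)) ^ ℓ ∈ A⁰ := pow_mem (prod_mem fun j _ => hf j) ℓ
    have := koszulIdeal_le_ker hkj hℓ
    rwa [RingHom.mem_ker, map_mul, presentation_C, C_mul_eq_zero_iff hg] at this

end MultiRees

theorem stmt13_general {R : Type*} [CommRing R] [IsDomain R]
    (n r : ℕ) (κ : Type*) (f : κ → MvPolynomial (Fin n) R)
    (jdx : κ → Fin r) (kj : Fin r → κ) (hkj : ∀ j, jdx (kj j) = j)
    (hne : ∀ j, f (kj j) ≠ 0) :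
    letI φ : MvPolynomial κ (MvPolynomial (Fin n) R) →ₐ[MvPolynomial (Fin n) R]
        MvPolynomial (Fin r) (MvPolynomial (Fin n) R) :=
      aeval (fun k => C (f k) * X (jdx k))
    letI L : Ideal (MvPolynomial κ (MvPolynomial (Fin n) R)) :=
      Ideal.span (Set.range (fun k =>
        C (f (kj (jdx k))) * X k - C (f k) * X (kj (jdx k))))
    ∀ q : MvPolynomial κ (MvPolynomial (Fin n) R),
      φ q = 0 ↔ ∃ ℓ : ℕ, C ((∏ j : Fin r, f (kj j)) ^ ℓ) * q ∈ L :=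
  MultiRees.presentation_eq_zero_iff hkj fun j => mem_nonZeroDivisors_of_ne_zero (hne j)

/-- Theorem 3.11 (equations of the multi-Rees algebra over a PID): let `R` be a PID and
`I₁,…,I_r` ideals of `R[x₁,…,xₙ]` with generators `f_k` (indexed by `κ`, with block map
`jdx`), and for each `j` a distinguished nonzero generator `f_{k_j}`.  Let `L` be the
ideal generated by the Koszul relations `f_{k_j}T_{k,j} − f_k T_{k_j,j}`.  Then the
kernel of the presentation `φ : R[x][{T_{k,j}}] → R[x][I₁t₁,…,I_rt_r]`, `T_{k,j} ↦ f_k tⱼ`,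
equals the saturation `L : (∏_j f_{k_j})^∞`. -/
theorem stmt13 {R : Type*} [CommRing R] [IsDomain R] [IsPrincipalIdealRing R]
    (n r : ℕ) (κ : Type*) (f : κ → MvPolynomial (Fin n) R)
    (jdx : κ → Fin r) (kj : Fin r → κ) (hkj : ∀ j, jdx (kj j) = j)
    (hne : ∀ j, f (kj j) ≠ 0) :
    letI φ : MvPolynomial κ (MvPolynomial (Fin n) R) →ₐ[MvPolynomial (Fin n) R]
        MvPolynomial (Fin r) (MvPolynomial (Fin n) R) :=
      aeval (fun k => C (f k) * X (jdx k))
    letI L : Ideal (MvPolynomial κ (MvPolynomial (Fin n) R)) :=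
      Ideal.span (Set.range (fun k =>
        C (f (kj (jdx k))) * X k - C (f k) * X (kj (jdx k))))
    ∀ q : MvPolynomial κ (MvPolynomial (Fin n) R),
      φ q = 0 ↔ ∃ ℓ : ℕ, C ((∏ j : Fin r, f (kj j)) ^ ℓ) * q ∈ L :=
  stmt13_general n r κ f jdx kj hkj hne
end

section
/- One inclusion of the Rees kernel description: for any commutative ring R, ideals I_j of R[x] with generators f_k, distinguished generators f_{k_j} that are nonzero divisors, and L the ideal generated by the Koszul relations f_{k_j}T_{k,j} − f_kT_{k_j,j}, the saturation L : (∏_j f_{k_j})^∞ is contained in the kernel of the presentation map φ of the multi-Rees algebra. -/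
open MvPolynomial

namespace MvPolynomial

variable {S σ κ : Type*} [CommRing S]

theorem C_mem_nonZeroDivisors {a : S} (ha : a ∈ nonZeroDivisors S) :
    (C a : MvPolynomial σ S) ∈ nonZeroDivisors (MvPolynomial σ S) :=
  (isRegular_iff_mem_nonZeroDivisors.2 ha).monomial.mem_nonZeroDivisors

/-- Both terms of the generator indexed by `k` map to `g (base j) * g k * X j`, where `j = idx k`. -/
theorem span_range_sub_le_ker_aeval (g : κ → S) (idx : κ → σ) (base : σ → κ)
    (hbase : ∀ i, idx (base i) = i) :
    Ideal.span (Set.range fun k => C (g (base (idx k))) * X k - C (g k) * X (base (idx k))) ≤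
      RingHom.ker (aeval fun k => C (g k) * X (idx k) : MvPolynomial κ S →ₐ[S] MvPolynomial σ S) := by
  rw [Ideal.span_le]
  rintro _ ⟨k, rfl⟩
  simp only [SetLike.mem_coe, RingHom.mem_ker, map_sub, map_mul, aeval_C, aeval_X,
    algebraMap_eq, hbase]
  ring

end MvPolynomial

/-- One inclusion of the Rees kernel description over any commutative ring: if the
distinguished generators `f_{k_j}` are nonzero divisors and `L` is the ideal generated by
the Koszul relations `f_{k_j}T_{k,j} − f_k T_{k_j,j}`, then
`L : (∏_j f_{k_j})^∞ ⊆ ker φ`: if `(∏_j f_{k_j})^ℓ · h ∈ L` then `φ(h) = 0`. -/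
theorem stmt14 {R : Type*} [CommRing R]
    (n r : ℕ) (κ : Type*) (f : κ → MvPolynomial (Fin n) R)
    (jdx : κ → Fin r) (kj : Fin r → κ) (hkj : ∀ j, jdx (kj j) = j)
    (hnzd : ∀ j, f (kj j) ∈ nonZeroDivisors (MvPolynomial (Fin n) R)) :
    letI φ : MvPolynomial κ (MvPolynomial (Fin n) R) →ₐ[MvPolynomial (Fin n) R]
        MvPolynomial (Fin r) (MvPolynomial (Fin n) R) :=
      aeval (fun k => C (f k) * X (jdx k))
    letI L : Ideal (MvPolynomial κ (MvPolynomial (Fin n) R)) :=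
      Ideal.span (Set.range (fun k =>
        C (f (kj (jdx k))) * X k - C (f k) * X (kj (jdx k))))
    ∀ (h : MvPolynomial κ (MvPolynomial (Fin n) R)) (ℓ : ℕ),
      C ((∏ j : Fin r, f (kj j)) ^ ℓ) * h ∈ L → φ h = 0 := by
  intro h ℓ hmem
  have hreg : (C ((∏ j, f (kj j)) ^ ℓ) : MvPolynomial (Fin r) (MvPolynomial (Fin n) R)) ∈
      nonZeroDivisors _ :=
    C_mem_nonZeroDivisors (pow_mem (prod_mem fun j _ => hnzd j) ℓ)
  have hker := span_range_sub_le_ker_aeval f jdx kj hkj hmem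
  rw [RingHom.mem_ker, map_mul, aeval_C, algebraMap_eq] at hker
  exact (mul_left_mem_nonZeroDivisors_eq_zero_iff hreg).1 hker
end

section
/- In (Z/8Z)[x₁,x₂] with I = ⟨2x₁, 2x₂⟩ and presentation φ : (Z/8Z)[x₁,x₂][T₁,T₂] → (Z/8Z)[x₁,x₂][It], φ(T₁) = 2x₁·t, φ(T₂) = 2x₂·t: the element T₁³ lies in ker φ but does not lie in the ideal J = ⟨x₁T₂ − x₂T₁, 4T₁, 4T₂⟩. -/
/-!
`φ(T₁³) = (2x₁)³t³ = 8x₁³t³ = 0`. For `T₁³ ∉ J`, reduce coefficients modulo `2` and evaluate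
`x₁, x₂` at `0`: this ring map kills `x₁T₂ − x₂T₁`, `4T₁` and `4T₂`, but sends `T₁³` to the
nonzero monomial `T₁³` over `ZMod 2`.
-/

open MvPolynomial

theorem Ideal.notMem_span_of_map_eq_zero {R S : Type*} [Semiring R] [Semiring S] (f : R →+* S)
    {s : Set R} (hs : ∀ y ∈ s, f y = 0) {x : R} (hx : f x ≠ 0) : x ∉ Ideal.span s :=
  fun h => hx <| Ideal.span_le.mpr (fun y hy => RingHom.mem_ker.mpr (hs y hy)) h

theorem two_mul_pow_three_eq_zero {R : Type*} [CommSemiring R] [CharP R 8] (a : R) :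
    (2 * a) ^ 3 = 0 := by
  rw [mul_pow, show (2 : R) ^ 3 = ((8 : ℕ) : R) by norm_num, CharP.cast_eq_zero, zero_mul]

namespace MvPolynomial

variable {σ τ : Type*}

noncomputable def reduceModTwoAtZero : MvPolynomial τ (ZMod 8) →+* ZMod 2 :=
  eval₂Hom (ZMod.castHom (by norm_num : 2 ∣ 8) (ZMod 2)) 0

@[simp]
theorem reduceModTwoAtZero_X (j : τ) : reduceModTwoAtZero (X j : MvPolynomial τ (ZMod 8)) = 0 :=
  eval₂Hom_X' _ _ j

theorem map_reduceModTwoAtZero_four_mul (p : MvPolynomial σ (MvPolynomial τ (ZMod 8))) :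
    map reduceModTwoAtZero (4 * p) = 0 := by
  rw [map_mul, map_ofNat, show (4 : MvPolynomial σ (ZMod 2)) = C 4 from (map_ofNat C 4).symm,
    show (4 : ZMod 2) = 0 by decide, C_0, zero_mul]

end MvPolynomial

/-- Example 4.4 (first part): over `Z/8Z[x₁,x₂]` with `I = ⟨2x₁, 2x₂⟩` and the Rees
presentation `φ(T₁) = 2x₁t`, `φ(T₂) = 2x₂t`, the element `T₁³` lies in `ker φ` but not in
the presentation-matrix ideal `J = ⟨x₁T₂ − x₂T₁, 4T₁, 4T₂⟩`. -/
theorem stmt15 :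
    letI P := MvPolynomial (Fin 2) (ZMod 8)
    letI φ : MvPolynomial (Fin 2) P →ₐ[P] MvPolynomial (Fin 1) P :=
      aeval (fun i : Fin 2 => C ((2 : P) * X i) * X (0 : Fin 1))
    letI J : Ideal (MvPolynomial (Fin 2) P) :=
      Ideal.span {C (X 0 : P) * X 1 - C (X 1 : P) * X 0, 4 * X 0, 4 * X 1}
    φ ((X 0 : MvPolynomial (Fin 2) P) ^ 3) = 0 ∧
      (X 0 : MvPolynomial (Fin 2) P) ^ 3 ∉ J := by
  refine ⟨?_, Ideal.notMem_span_of_map_eq_zero (map reduceModTwoAtZero) ?_ ?_⟩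
  · rw [map_pow, aeval_X, mul_pow, ← map_pow, two_mul_pow_three_eq_zero, map_zero, zero_mul]
  · rintro y (rfl | rfl | rfl)
    · simp
    all_goals exact map_reduceModTwoAtZero_four_mul _
  · rw [map_pow, map_X]
    exact pow_ne_zero 3 (X_ne_zero 0)
end

section
/- In (Z/8Z)[x₁,x₂][T₁,T₂] with J = ⟨x₁T₂ − x₂T₁, 4T₁, 4T₂⟩: for every nonzero divisor h ∈ (Z/8Z)[x₁,x₂] and every natural number ℓ, h^ℓ·T₁³ ∉ J. Consequently the kernel of the Rees presentation of I = ⟨2x₁,2x₂⟩ is not equal to any saturation J : h^∞ of J at a nonzero divisor h. -/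
/-!
Send `T₁, T₂` back to `x₁, x₂`. This kills `x₁T₂ − x₂T₁` and maps `J` into `4P`, so
`h^ℓT₁³ ∈ J` would give `h^ℓx₁³ ∈ 4P`, hence `2x₁³h^ℓ = 0`; as `h` is a nonzero divisor
this forces `2x₁³ = 0` in `(ℤ/8ℤ)[x₁,x₂]`, which is false. On the other hand
`T₁³ ↦ (2x₁t)³ = 8x₁³t³ = 0`, so `T₁³` lies in the kernel of the Rees map but in no
saturation `J : h^∞`.
-/

open MvPolynomial

theorem mul_notMem_span_singleton_of_mem_nonZeroDivisors {R : Type*} [CommSemiring R]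
    {a c y h : R} (hac : a * c = 0) (hay : a * y ≠ 0) (hh : h ∈ nonZeroDivisors R) :
    h * y ∉ Ideal.span {c} := by
  intro hmem
  obtain ⟨w, hw⟩ := Ideal.mem_span_singleton.1 hmem
  refine hay ((mul_right_mem_nonZeroDivisors_eq_zero_iff hh).1 ?_)
  calc a * y * h = a * (h * y) := by ring
    _ = a * c * w := by rw [hw, mul_assoc]
    _ = 0 := by rw [hac, zero_mul]

theorem aeval_mem_span_of_mem_span_koszul_mul_X {R σ : Type*} [CommRing R] {x : σ → R}
    {i j : σ} {c q : MvPolynomial σ R}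
    (hq : q ∈ Ideal.span {C (x i) * X j - C (x j) * X i, c * X i, c * X j}) :
    aeval x q ∈ Ideal.span {aeval x c} := by
  suffices h : Ideal.span {C (x i) * X j - C (x j) * X i, c * X i, c * X j} ≤
      (Ideal.span {aeval x c}).comap (aeval x) from h hq
  rw [Ideal.span_le]
  rintro p (rfl | rfl | rfl) <;> simp [Ideal.mem_span_singleton, mul_comm]

theorem aeval_C_mul_X_pow_eq_zero {R σ τ : Type*} [CommSemiring R] {a : σ → R} {i : σ}
    {n : ℕ} (hn : a i ^ n = 0) (k : τ) :
    aeval (fun j => C (a j) * X k) (X i ^ n : MvPolynomial σ R) = 0 := by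
  rw [map_pow, aeval_X, mul_pow, ← map_pow, hn, map_zero, zero_mul]

section

variable {σ : Type*}

theorem two_mul_X_pow_ne_zero (i : σ) (n : ℕ) :
    (2 : MvPolynomial σ (ZMod 8)) * X i ^ n ≠ 0 := by
  rw [← map_ofNat C 2, C_mul_X_pow_eq_monomial, Ne, monomial_eq_zero]
  decide

theorem two_mul_four_eq_zero : (2 : MvPolynomial σ (ZMod 8)) * 4 = 0 := by
  rw [show (2 : MvPolynomial σ (ZMod 8)) * 4 = 8 by norm_num]
  exact CharP.ofNat_eq_zero _ 8

end

theorem C_pow_mul_X_pow_three_notMem_span {h : MvPolynomial (Fin 2) (ZMod 8)}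
    (hh : h ∈ nonZeroDivisors _) (ℓ : ℕ) :
    C (h ^ ℓ) * (X 0 : MvPolynomial (Fin 2) (MvPolynomial (Fin 2) (ZMod 8))) ^ 3 ∉
      Ideal.span {C (X 0) * X 1 - C (X 1) * X 0, 4 * X 0, 4 * X 1} := by
  intro hmem
  have hspan := aeval_mem_span_of_mem_span_koszul_mul_X (x := X) hmem
  simp only [map_mul, map_pow, aeval_C, aeval_X, map_ofNat] at hspan
  exact mul_notMem_span_singleton_of_mem_nonZeroDivisors two_mul_four_eq_zero
    (two_mul_X_pow_ne_zero 0 3) (pow_mem hh ℓ) hspan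

/-- Example 4.4 (main part): over `Z/8Z[x₁,x₂]` with `J = ⟨x₁T₂ − x₂T₁, 4T₁, 4T₂⟩`, for
every nonzero divisor `h` of `Z/8Z[x₁,x₂]` and every `ℓ`, `h^ℓ·T₁³ ∉ J`; consequently the
kernel of the Rees presentation of `I = ⟨2x₁, 2x₂⟩` is not the saturation `J : h^∞` for
any nonzero divisor `h`. -/
theorem stmt16 :
    letI P := MvPolynomial (Fin 2) (ZMod 8)
    letI φ : MvPolynomial (Fin 2) P →ₐ[P] MvPolynomial (Fin 1) P :=
      aeval (fun i : Fin 2 => C ((2 : P) * X i) * X (0 : Fin 1))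
    letI J : Ideal (MvPolynomial (Fin 2) P) :=
      Ideal.span {C (X 0 : P) * X 1 - C (X 1 : P) * X 0, 4 * X 0, 4 * X 1}
    (∀ h ∈ nonZeroDivisors P, ∀ ℓ : ℕ,
        C (h ^ ℓ) * (X 0 : MvPolynomial (Fin 2) P) ^ 3 ∉ J) ∧
    (∀ h ∈ nonZeroDivisors P,
        {q : MvPolynomial (Fin 2) P | ∃ ℓ : ℕ, C (h ^ ℓ) * q ∈ J} ≠
        {q : MvPolynomial (Fin 2) P | φ q = 0}) := by
  refine ⟨fun h hh => C_pow_mul_X_pow_three_notMem_span hh, fun h hh heq => ?_⟩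
  have hcube : ((2 : MvPolynomial (Fin 2) (ZMod 8)) * X 0) ^ 3 = 0 := by
    rw [mul_pow, show (2 : MvPolynomial (Fin 2) (ZMod 8)) ^ 3 = 2 * 4 by norm_num,
      two_mul_four_eq_zero, zero_mul]
  obtain ⟨ℓ, hmem⟩ := (Set.ext_iff.1 heq _).2 (aeval_C_mul_X_pow_eq_zero
    (a := fun i => 2 * X i) hcube 0)
  exact C_pow_mul_X_pow_three_notMem_span hh ℓ hmem
end

section
/- Let R = B/p^mB with B a PID and p prime, m ≥ 2, and let f ∈ R[x₁,…,xₙ] be nonzero. Then f can be written as f = c·f_red where c ∈ R is (the class of) the gcd of lifts of the coefficients of f and f_red has unit content (the gcd of the coefficients of f_red is a unit); moreover f_red is a nonzero divisor in R[x₁,…,xₙ]. -/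
/-!
`B ⧸ (p ^ m)` is a local principal ideal ring with maximal ideal `(p)`. In such a ring write the
ideal generated by the coefficients of `f` as `(c)`, so `f = c • f_red`; if no coefficient of
`f_red` were a unit, then `(c) ≤ 𝔪 • (c)` and Nakayama's lemma would give `c = 0`. A polynomial
with a unit coefficient stays nonzero over the residue field `k`, and `k[x]` is a domain; so if
`g * f_red = 0` with `g = c' • g'`, some coefficient of `g' * f_red` is a unit annihilated by `c'`,
forcing `c' = 0`.
-/

open MvPolynomial

theorem Ideal.Quotient.isLocalRing_pow {S : Type*} [CommRing S] (I : Ideal S) [I.IsMaximal]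
    {n : ℕ} (hn : n ≠ 0) : IsLocalRing (S ⧸ I ^ n) := by
  have : Nontrivial (S ⧸ I ^ n) := Ideal.Quotient.nontrivial_iff.2 <|
    ne_top_of_le_ne_top (IsMaximal.ne_top ‹_›) (Ideal.pow_le_self hn)
  refine .of_nonunits_add fun a b ha hb => ?_
  obtain ⟨a, rfl⟩ := mk_surjective a
  obtain ⟨b, rfl⟩ := mk_surjective b
  simp only [mem_nonunits_iff, ← map_add, isUnit_mk_pow_iff_notMem I hn, not_not] at *
  exact add_mem ha hb

namespace MvPolynomial

variable {σ R : Type*} [CommRing R] [IsLocalRing R]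

theorem map_residue_ne_zero_iff {f : MvPolynomial σ R} :
    map (IsLocalRing.residue R) f ≠ 0 ↔ ∃ d, IsUnit (f.coeff d) := by
  simp only [ne_eq, MvPolynomial.ext_iff, coeff_map, coeff_zero, not_forall,
    IsLocalRing.residue_ne_zero_iff_isUnit]

variable [IsPrincipalIdealRing R]

theorem exists_eq_C_mul_isUnit_coeff {f : MvPolynomial σ R} (hf : f ≠ 0) :
    ∃ c fred, f = C c * fred ∧ ∃ d, IsUnit (fred.coeff d) := by
  set J := Ideal.span (Set.range f.coeff)
  obtain ⟨c, hc⟩ := (IsPrincipalIdealRing.principal J).principal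
  replace hc : J = Ideal.span {c} := hc
  obtain ⟨fred, rfl⟩ : C c ∣ f := (C_dvd_iff_dvd_coeff c f).2 fun d =>
    Ideal.mem_span_singleton.1 (hc ▸ Ideal.subset_span ⟨d, rfl⟩)
  refine ⟨c, fred, rfl, ?_⟩
  by_contra! hnonunit
  have hle : J ≤ IsLocalRing.maximalIdeal R • J := by
    refine Ideal.span_le.2 (Set.range_subset_iff.2 fun d => ?_)
    rw [SetLike.mem_coe, coeff_C_mul, mul_comm, hc]
    exact Submodule.smul_mem_smul (hnonunit d) (Ideal.mem_span_singleton_self c)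
  have hJ := Submodule.eq_bot_of_le_smul_of_le_jacobson_bot _ _
    (hc ▸ Submodule.fg_span_singleton c) hle (IsLocalRing.jacobson_eq_maximalIdeal ⊥ bot_ne_top).ge
  rw [hc, Ideal.span_singleton_eq_bot] at hJ
  exact hf (by rw [hJ, C_0, zero_mul])

theorem mem_nonZeroDivisors_of_isUnit_coeff {f : MvPolynomial σ R} {d : σ →₀ ℕ}
    (hd : IsUnit (f.coeff d)) : f ∈ nonZeroDivisors (MvPolynomial σ R) := by
  rw [mem_nonZeroDivisors_iff_right]
  intro g hg
  by_contra hg0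
  obtain ⟨c, g', rfl, hg'⟩ := exists_eq_C_mul_isUnit_coeff hg0
  obtain ⟨e, he⟩ : ∃ e, IsUnit ((g' * f).coeff e) := map_residue_ne_zero_iff.1 <| by
    rw [map_mul]
    exact mul_ne_zero (map_residue_ne_zero_iff.2 hg') (map_residue_ne_zero_iff.2 ⟨d, hd⟩)
  have : c * (g' * f).coeff e = 0 := by rw [← coeff_C_mul, ← mul_assoc, hg, coeff_zero]
  exact hg0 (by rw [he.mul_left_eq_zero.1 this, C_0, zero_mul])

end MvPolynomial

/-- Reduction of polynomials over `R = B ⧸ p^m B` (`m ≥ 2`): every nonzero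
`f ∈ R[x₁,…,xₙ]` can be written as `f = c · f_red`, where `c ∈ R` is the (class of the)
gcd of lifts of the coefficients of `f`, and `f_red` has unit content — some coefficient
of `f_red` is a unit — and `f_red` is a nonzero divisor in `R[x₁,…,xₙ]`. -/
theorem stmt19 {B : Type*} [CommRing B] [IsDomain B] [IsPrincipalIdealRing B]
    (p : B) (hp : Prime p) (m : ℕ) (hm : 2 ≤ m) (n : ℕ)
    (f : MvPolynomial (Fin n) (B ⧸ Ideal.span {p ^ m})) (hf : f ≠ 0) :
    ∃ (c : B ⧸ Ideal.span {p ^ m})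
      (fred : MvPolynomial (Fin n) (B ⧸ Ideal.span {p ^ m})),
      f = C c * fred ∧
      (∃ d, IsUnit (MvPolynomial.coeff d fred)) ∧
      fred ∈ nonZeroDivisors (MvPolynomial (Fin n) (B ⧸ Ideal.span {p ^ m})) := by
  have : (Ideal.span {p}).IsMaximal := PrincipalIdealRing.isMaximal_of_irreducible hp.irreducible
  have : IsLocalRing (B ⧸ Ideal.span {p ^ m}) :=
    Ideal.span_singleton_pow p m ▸ Ideal.Quotient.isLocalRing_pow _ (by omega)
  have : IsPrincipalIdealRing (B ⧸ Ideal.span {p ^ m}) :=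
    .of_surjective _ Ideal.Quotient.mk_surjective
  obtain ⟨c, fred, rfl, d, hd⟩ := exists_eq_C_mul_isUnit_coeff hf
  exact ⟨c, fred, rfl, ⟨d, hd⟩, mem_nonZeroDivisors_of_isUnit_coeff hd⟩
end
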